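/- The unrestricted context can be internalized with ! up to logical equivalence: (Γ;Δ) ≼_l (·; !Γ,Δ) and (·; !Γ,Δ) ≼_l (Γ;Δ), where !Γ denotes the linear context obtained by prefixing every formula of Γ with ! and · denotes the empty unrestricted context. -/

import Mathlib

/-- Formulas of the linear-logic fragment: atoms, 1, ⊗, ⊤, &, atomic-antecedent ⊸, !. -/
inductive Formula : Type where
  | atom : ℕ → Formula
  | one : Formula
  | tensor : Formula → Formula → Formula
  | top : Formula
  | with_ : Formula → Formula → Formula
  | limp : ℕ → Formula → Formula
  | bang : Formula → Formula
deriving DecidableEq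

/-- Contexts are finite multisets of formulas. -/
abbrev Ctx : Type := Multiset Formula

/-- A process state (Γ;Δ): unrestricted context Γ and linear context Δ. -/
abbrev State : Type := Ctx × Ctx

/-- Composition of states: ((Γ1;Δ1),(Γ2;Δ2)) = (Γ1,Γ2; Δ1,Δ2). -/
def State.comp (s t : State) : State := (s.1 + t.1, s.2 + t.2)

/-- DILL derivability Γ;Δ ⊢ A. -/
inductive Derives : Ctx → Ctx → Formula → Prop where
  | init (Γ : Ctx) (a : ℕ) : Derives Γ {Formula.atom a} (Formula.atom a)
  | clone {Γ Δ : Ctx} {A C : Formula} :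
      Derives (A ::ₘ Γ) (A ::ₘ Δ) C → Derives (A ::ₘ Γ) Δ C
  | tensorR {Γ Δ₁ Δ₂ : Ctx} {A B : Formula} :
      Derives Γ Δ₁ A → Derives Γ Δ₂ B → Derives Γ (Δ₁ + Δ₂) (Formula.tensor A B)
  | tensorL {Γ Δ : Ctx} {A B C : Formula} :
      Derives Γ (A ::ₘ B ::ₘ Δ) C → Derives Γ (Formula.tensor A B ::ₘ Δ) C
  | oneR (Γ : Ctx) : Derives Γ 0 Formula.one
  | oneL {Γ Δ : Ctx} {C : Formula} :
      Derives Γ Δ C → Derives Γ (Formula.one ::ₘ Δ) C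
  | withR {Γ Δ : Ctx} {A B : Formula} :
      Derives Γ Δ A → Derives Γ Δ B → Derives Γ Δ (Formula.with_ A B)
  | withL₁ {Γ Δ : Ctx} {A₁ A₂ C : Formula} :
      Derives Γ (A₁ ::ₘ Δ) C → Derives Γ (Formula.with_ A₁ A₂ ::ₘ Δ) C
  | withL₂ {Γ Δ : Ctx} {A₁ A₂ C : Formula} :
      Derives Γ (A₂ ::ₘ Δ) C → Derives Γ (Formula.with_ A₁ A₂ ::ₘ Δ) C
  | topR (Γ Δ : Ctx) : Derives Γ Δ Formula.top
  | limpR {Γ Δ : Ctx} {a : ℕ} {B : Formula} :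
      Derives Γ (Formula.atom a ::ₘ Δ) B → Derives Γ Δ (Formula.limp a B)
  | limpL {Γ Δ₁ Δ₂ : Ctx} {a : ℕ} {B C : Formula} :
      Derives Γ Δ₁ (Formula.atom a) → Derives Γ (B ::ₘ Δ₂) C →
      Derives Γ (Formula.limp a B ::ₘ (Δ₁ + Δ₂)) C
  | bangR {Γ : Ctx} {A : Formula} :
      Derives Γ 0 A → Derives Γ 0 (Formula.bang A)
  | bangL {Γ Δ : Ctx} {A C : Formula} :
      Derives (A ::ₘ Γ) Δ C → Derives Γ (Formula.bang A ::ₘ Δ) C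

/-- The logical preorder (Γ1;Δ1) ≼ₗ (Γ2;Δ2). -/
def LogicalPre (s t : State) : Prop :=
  ∀ (Γ' Δ' : Ctx) (C : Formula),
    Derives (Γ' + s.1) (Δ' + s.2) C → Derives (Γ' + t.1) (Δ' + t.2) C

/-- The reduction relation ⇝ on process states. -/
inductive Red : State → State → Prop where
  | tensor (Γ Δ : Ctx) (A B : Formula) :
      Red (Γ, Formula.tensor A B ::ₘ Δ) (Γ, A ::ₘ B ::ₘ Δ)
  | one (Γ Δ : Ctx) :
      Red (Γ, Formula.one ::ₘ Δ) (Γ, Δ)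
  | with₁ (Γ Δ : Ctx) (A₁ A₂ : Formula) :
      Red (Γ, Formula.with_ A₁ A₂ ::ₘ Δ) (Γ, A₁ ::ₘ Δ)
  | with₂ (Γ Δ : Ctx) (A₁ A₂ : Formula) :
      Red (Γ, Formula.with_ A₁ A₂ ::ₘ Δ) (Γ, A₂ ::ₘ Δ)
  | comm (Γ Δ : Ctx) (a : ℕ) (B : Formula) :
      Red (Γ, Formula.atom a ::ₘ Formula.limp a B ::ₘ Δ) (Γ, B ::ₘ Δ)
  | bang (Γ Δ : Ctx) (A : Formula) :
      Red (Γ, Formula.bang A ::ₘ Δ) (A ::ₘ Γ, Δ)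
  | clone (Γ Δ : Ctx) (A : Formula) :
      Red (A ::ₘ Γ, Δ) (A ::ₘ Γ, A ::ₘ Δ)

/-- ⇝*, the reflexive-transitive closure of reduction. -/
def RedStar : State → State → Prop := Relation.ReflTransGen Red

/-- Labels of the LTS: τ, send !a, receive ?a. -/
inductive Label : Type where
  | tau : Label
  | send : ℕ → Label
  | recv : ℕ → Label
deriving DecidableEq

/-- The labeled transition system on states. -/
inductive Step : State → Label → State → Prop where
  | send (Γ Δ : Ctx) (a : ℕ) :
      Step (Γ, Formula.atom a ::ₘ Δ) (Label.send a) (Γ, Δ)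
  | recv (Γ Δ : Ctx) (a : ℕ) (B : Formula) :
      Step (Γ, Formula.limp a B ::ₘ Δ) (Label.recv a) (Γ, B ::ₘ Δ)
  | comm {s₁ s₁' s₂ s₂' : State} {a : ℕ} :
      Step s₁ (Label.send a) s₁' → Step s₂ (Label.recv a) s₂' →
      Step (State.comp s₁ s₂) Label.tau (State.comp s₁' s₂')
  | tensor (Γ Δ : Ctx) (A B : Formula) :
      Step (Γ, Formula.tensor A B ::ₘ Δ) Label.tau (Γ, A ::ₘ B ::ₘ Δ)
  | one (Γ Δ : Ctx) :
      Step (Γ, Formula.one ::ₘ Δ) Label.tau (Γ, Δ)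
  | with₁ (Γ Δ : Ctx) (A₁ A₂ : Formula) :
      Step (Γ, Formula.with_ A₁ A₂ ::ₘ Δ) Label.tau (Γ, A₁ ::ₘ Δ)
  | with₂ (Γ Δ : Ctx) (A₁ A₂ : Formula) :
      Step (Γ, Formula.with_ A₁ A₂ ::ₘ Δ) Label.tau (Γ, A₂ ::ₘ Δ)
  | bang (Γ Δ : Ctx) (A : Formula) :
      Step (Γ, Formula.bang A ::ₘ Δ) Label.tau (A ::ₘ Γ, Δ)
  | clone (Γ Δ : Ctx) (A : Formula) :
      Step (A ::ₘ Γ, Δ) Label.tau (A ::ₘ Γ, A ::ₘ Δ)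

/-- ⇒τ, the reflexive-transitive closure of —τ→. -/
def WeakTau : State → State → Prop :=
  Relation.ReflTransGen (fun s t => Step s Label.tau t)

/-- Weak transition ⇒β: for β = τ it is ⇒τ, otherwise ⇒τ—β→⇒τ. -/
def WeakStep (s : State) (β : Label) (t : State) : Prop :=
  match β with
  | Label.tau => WeakTau s t
  | _ => ∃ u v, WeakTau s u ∧ Step u β v ∧ WeakTau v t

/-- A label is a "non-receive" label α (i.e., τ or a send). -/
def Label.isNonRecv : Label → Prop
  | Label.recv _ => False
  | _ => True

/-- A relation on states is a simulation. -/
def IsSimulation (R : State → State → Prop) : Prop :=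
  ∀ s t, R s t →
    (s.2 = 0 → ∃ Γ₂' : Ctx, WeakTau t (Γ₂', 0) ∧ R (s.1, 0) (Γ₂', 0)) ∧
    (∀ s₁ s₂ : State, s = State.comp s₁ s₂ →
      ∃ t₁ t₂ : State, WeakTau t (State.comp t₁ t₂) ∧ R s₁ t₁ ∧ R s₂ t₂) ∧
    (∀ (α : Label) (s' : State), α.isNonRecv → Step s α s' →
      ∃ t', WeakStep t α t' ∧ R s' t') ∧
    (∀ (a : ℕ) (s' : State), Step s (Label.recv a) s' →
      ∃ t', WeakTau (t.1, Formula.atom a ::ₘ t.2) t' ∧ R s' t')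

/-- The simulation preorder ≼ₛ. -/
def SimPre (s t : State) : Prop :=
  ∃ R : State → State → Prop, IsSimulation R ∧ R s t

/-- Strong barb: (Γ;Δ)↓a. -/
def Barb (s : State) (a : ℕ) : Prop := Formula.atom a ∈ s.2

/-- Weak barb: (Γ;Δ)⇓a. -/
def WeakBarb (s : State) (a : ℕ) : Prop := ∃ t, RedStar s t ∧ Barb t a

def BarbPreserving (R : State → State → Prop) : Prop :=
  ∀ s t a, R s t → Barb s a → WeakBarb t a

def ReductionClosed (R : State → State → Prop) : Prop :=
  ∀ s t s', R s t → Red s s' → ∃ t', RedStar t t' ∧ R s' t'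

def Compositional (R : State → State → Prop) : Prop :=
  ∀ s t u, R s t → R (State.comp s u) (State.comp t u)

def PartitionPreserving (R : State → State → Prop) : Prop :=
  ∀ s t, R s t →
    (s.2 = 0 → ∃ Γ₂' : Ctx, RedStar t (Γ₂', 0) ∧ R (s.1, 0) (Γ₂', 0)) ∧
    (∀ s₁ s₂ : State, s = State.comp s₁ s₂ →
      ∃ t₁ t₂ : State, RedStar t (State.comp t₁ t₂) ∧ R s₁ t₁ ∧ R s₂ t₂)

/-- The contextual preorder ≼_c: the largest barb-preserving, reduction-closed,
compositional, partition-preserving relation on states. -/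
def CtxPre (s t : State) : Prop :=
  ∃ R : State → State → Prop,
    BarbPreserving R ∧ ReductionClosed R ∧ Compositional R ∧ PartitionPreserving R ∧ R s t

/-- ⊗Δ: the ⊗-conjunction of all formulas in Δ (1 if Δ is empty). -/
noncomputable def bigTensor (Δ : Ctx) : Formula :=
  Δ.toList.foldr Formula.tensor Formula.one

/-- !Γ: prefix every formula of Γ with !. -/
def bangCtx (Γ : Ctx) : Ctx := Γ.map Formula.bang

/-! Every derivation of `Γ, A; Δ ⊢ C` becomes one of `Γ; Δ, !A ⊢ C` by a single `!L`.
Conversely, `!L` is invertible: a `!A` in the linear context is never consumed by any rule but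
`!L`, so it can be traced up the derivation and replaced, at the `!L` step that introduces it,
by the unrestricted `A`; in the branches that do not receive `!A`, `A` is added by weakening. -/

theorem Multiset.cons_eq_add {α : Type*} {a : α} {s t u : Multiset α} (h : a ::ₘ s = t + u) :
    (∃ t', t = a ::ₘ t' ∧ s = t' + u) ∨ (∃ u', u = a ::ₘ u' ∧ s = t + u') := by
  rcases Multiset.mem_add.mp (h ▸ Multiset.mem_cons_self a s) with ha | ha
  · obtain ⟨t', rfl⟩ := Multiset.exists_cons_of_mem ha
    rw [Multiset.cons_add, Multiset.cons_inj_right] at h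
    exact .inl ⟨t', rfl, h⟩
  · obtain ⟨u', rfl⟩ := Multiset.exists_cons_of_mem ha
    rw [Multiset.add_cons, Multiset.cons_inj_right] at h
    exact .inr ⟨u', rfl, h⟩

theorem bangCtx_cons (A : Formula) (Γ : Ctx) :
    bangCtx (A ::ₘ Γ) = Formula.bang A ::ₘ bangCtx Γ :=
  Multiset.map_cons _ _ _

namespace Derives

theorem weaken {Γ Δ : Ctx} {C : Formula} (h : Derives Γ Δ C) (A : Formula) :
    Derives (A ::ₘ Γ) Δ C := by
  induction h with
  | init => exact .init _ _
  | clone _ ih =>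
    rw [Multiset.cons_swap] at ih ⊢
    exact .clone ih
  | tensorR _ _ ih₁ ih₂ => exact .tensorR ih₁ ih₂
  | tensorL _ ih => exact .tensorL ih
  | oneR => exact .oneR _
  | oneL _ ih => exact .oneL ih
  | withR _ _ ih₁ ih₂ => exact .withR ih₁ ih₂
  | withL₁ _ ih => exact .withL₁ ih
  | withL₂ _ ih => exact .withL₂ ih
  | topR => exact .topR _ _
  | limpR _ ih => exact .limpR ih
  | limpL _ _ ih₁ ih₂ => exact .limpL ih₁ ih₂
  | bangR _ ih => exact .bangR ih
  | bangL _ ih =>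
    rw [Multiset.cons_swap] at ih
    exact .bangL ih

theorem bangL_inv {Γ Δ : Ctx} {A C : Formula} (h : Derives Γ (Formula.bang A ::ₘ Δ) C) :
    Derives (A ::ₘ Γ) Δ C := by
  generalize hΔ : Formula.bang A ::ₘ Δ = Δ₀ at h
  induction h generalizing Δ with
  | init => simpa using congrArg (Formula.bang A ∈ ·) hΔ
  | @clone _ _ B _ _ ih =>
    subst hΔ
    have h := ih (Δ := B ::ₘ Δ) (Multiset.cons_swap _ _ _)
    rw [Multiset.cons_swap] at h ⊢
    exact .clone h
  | tensorR h₁ h₂ ih₁ ih₂ =>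
    rcases Multiset.cons_eq_add hΔ with ⟨Δ₁, rfl, rfl⟩ | ⟨Δ₂, rfl, rfl⟩
    · exact .tensorR (ih₁ rfl) (h₂.weaken A)
    · exact .tensorR (h₁.weaken A) (ih₂ rfl)
  | tensorL _ ih =>
    obtain ⟨-, Δ₁, rfl, rfl⟩ := (Multiset.cons_eq_cons.mp hΔ).resolve_left (by simp)
    exact .tensorL (ih (by simp only [Multiset.cons_swap]))
  | oneR => simp at hΔ
  | oneL _ ih =>
    obtain ⟨-, Δ₁, rfl, rfl⟩ := (Multiset.cons_eq_cons.mp hΔ).resolve_left (by simp)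
    exact .oneL (ih rfl)
  | withR _ _ ih₁ ih₂ => exact .withR (ih₁ hΔ) (ih₂ hΔ)
  | withL₁ _ ih =>
    obtain ⟨-, Δ₁, rfl, rfl⟩ := (Multiset.cons_eq_cons.mp hΔ).resolve_left (by simp)
    exact .withL₁ (ih (Multiset.cons_swap _ _ _))
  | withL₂ _ ih =>
    obtain ⟨-, Δ₁, rfl, rfl⟩ := (Multiset.cons_eq_cons.mp hΔ).resolve_left (by simp)
    exact .withL₂ (ih (Multiset.cons_swap _ _ _))
  | topR => exact .topR _ _
  | limpR _ ih =>
    subst hΔ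
    exact .limpR (ih (Multiset.cons_swap _ _ _))
  | limpL h₁ h₂ ih₁ ih₂ =>
    obtain ⟨-, Δ₀, rfl, hΔ₀⟩ := (Multiset.cons_eq_cons.mp hΔ).resolve_left (by simp)
    rcases Multiset.cons_eq_add hΔ₀.symm with ⟨Δ₁, rfl, rfl⟩ | ⟨Δ₂, rfl, rfl⟩
    · exact .limpL (ih₁ rfl) (h₂.weaken A)
    · exact .limpL (h₁.weaken A) (ih₂ (Multiset.cons_swap _ _ _))
  | bangR => simp at hΔ
  | bangL h ih =>
    rcases Multiset.cons_eq_cons.mp hΔ with ⟨hAB, rfl⟩ | ⟨-, Δ₁, rfl, rfl⟩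
    · cases hAB
      exact h
    · have h := ih (Δ := Δ₁) rfl
      rw [Multiset.cons_swap] at h
      exact .bangL h

theorem bang_cons_iff {Γ Δ : Ctx} {A C : Formula} :
    Derives Γ (Formula.bang A ::ₘ Δ) C ↔ Derives (A ::ₘ Γ) Δ C :=
  ⟨bangL_inv, bangL⟩

theorem add_iff_bangCtx_add {Γ₀ Γ Δ : Ctx} {C : Formula} :
    Derives (Γ₀ + Γ) Δ C ↔ Derives Γ₀ (bangCtx Γ + Δ) C := by
  induction Γ using Multiset.induction generalizing Γ₀ with
  | empty => simp [bangCtx]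
  | cons A Γ ih =>
    rw [Multiset.add_cons, ← Multiset.cons_add, ih, bangCtx_cons, Multiset.cons_add, bang_cons_iff]

end Derives

/-- (Γ;Δ) ≼ₗ (·;!Γ,Δ) and (·;!Γ,Δ) ≼ₗ (Γ;Δ). -/
theorem logicalPre_bang_internalize (Γ Δ : Ctx) :
    LogicalPre (Γ, Δ) (0, bangCtx Γ + Δ) ∧ LogicalPre (0, bangCtx Γ + Δ) (Γ, Δ) := by
  have key (Γ' Δ' : Ctx) (C : Formula) :
      Derives (Γ' + Γ) (Δ' + Δ) C ↔ Derives (Γ' + 0) (Δ' + (bangCtx Γ + Δ)) C := by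
    rw [add_zero, add_left_comm, Derives.add_iff_bangCtx_add]
  exact ⟨fun Γ' Δ' C => (key Γ' Δ' C).mp, fun Γ' Δ' C => (key Γ' Δ' C).mpr⟩
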